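/- arXiv:1903.03904 — 3 statements merged into one kernel-verified Lean document; each statement's English description precedes it below -/
import Mathlib

section
/- Let χ be a nontrivial additive character of F_q, d ≥ 2, j ∈ F_q^*, and m = (0,…,0,m_d) with m_d ≠ 0. Then the sum over x ∈ H_j of χ(m·x) equals (-1)·(q-1)^(d-2), i.e., the unnormalized Fourier transform of the indicator of H_j at m equals -(q-1)^(d-2). -/
open Finset

lemma count_prod_eq (F : Type) [Field F] [Fintype F] [DecidableEq F] :
    ∀ (n : ℕ) (c : F), c ≠ 0 →
      (Finset.univ.filter (fun y : Fin (n+1) → F => ∏ k, y k = c)).card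
        = (Fintype.card F - 1) ^ n := by
  intro n
  induction n with
  | zero =>
    intro c hc
    rw [pow_zero, Finset.card_eq_one]
    refine ⟨fun _ => c, ?_⟩
    ext y
    simp only [Finset.mem_filter, Finset.mem_univ, true_and, Finset.mem_singleton]
    constructor
    · intro h; ext i; fin_cases i; simpa using h
    · intro h; subst h; simp
  | succ n ih =>
    intro c hc
    classical
    have key : (Finset.univ.filter (fun y : Fin (n+2) → F => ∏ k, y k = c)).card
        = ∑ p : F × (Fin (n+1) → F),
            if (∏ k, p.2 k) * p.1 = c then 1 else 0 := by
      rw [Finset.card_filter]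
      rw [← Fintype.sum_equiv (Fin.snocEquiv (fun _ => F))
        (fun p => if (∏ k, p.2 k) * p.1 = c then 1 else 0)
        (fun y => if ∏ k, y k = c then 1 else 0)]
      intro p
      congr 1
      simp [Fin.snocEquiv, Fin.prod_snoc]
    rw [key, Fintype.sum_prod_type]
    have inner : ∀ a : F,
        (∑ z : Fin (n+1) → F, if (∏ k, z k) * a = c then 1 else 0)
          = if a = 0 then 0 else (Fintype.card F - 1) ^ n := by
      intro a
      by_cases ha : a = 0
      · simp [ha, hc, Ne.symm hc]
      · rw [if_neg ha, ← ih (c * a⁻¹) (mul_ne_zero hc (inv_ne_zero ha)),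
          Finset.card_filter]
        apply Finset.sum_congr rfl
        intro z _
        congr 1
        simp only [eq_iff_iff]
        exact ⟨fun h => by rw [← h, mul_assoc, mul_inv_cancel₀ ha, mul_one],
               fun h => by rw [h, mul_assoc, inv_mul_cancel₀ ha, mul_one]⟩
    simp_rw [inner]
    rw [Finset.sum_ite, Finset.sum_const_zero, zero_add, Finset.sum_const, smul_eq_mul]
    have hcard : (Finset.univ.filter (fun a : F => ¬ a = 0)).card = Fintype.card F - 1 := by
      have he : (Finset.univ.filter (fun a : F => ¬ a = 0)) = Finset.univ.erase 0 := by
        ext a; simp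
      rw [he, Finset.card_erase_of_mem (Finset.mem_univ 0), Finset.card_univ]
    rw [hcard, pow_succ, mul_comm]

/-- For `m = (0,…,0,m_d)` with `m_d ≠ 0`, the Fourier transform of the indicator
of the Hamming variety at `m` equals `-(q-1)^(d-2)`. -/
theorem hamming_fourier_last_coord (F : Type) [Field F] [Fintype F] [DecidableEq F]
    (χ : AddChar F ℂ) (hχ : χ ≠ 1) (d : ℕ) (hd : 2 ≤ d) (j : F) (hj : j ≠ 0)
    (m : Fin d → F) (hm0 : ∀ i : Fin d, (i : ℕ) < d - 1 → m i = 0)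
    (hmd : m ⟨d - 1, by omega⟩ ≠ 0) :
    ∑ x ∈ Finset.univ.filter (fun x : Fin d → F => ∏ k, x k = j),
        χ (∑ k, m k * x k)
      = -((Fintype.card F : ℂ) - 1) ^ (d - 2) := by
  classical
  obtain ⟨n, rfl⟩ : ∃ n, d = n + 2 := ⟨d - 2, by omega⟩
  set M : F := m (Fin.last (n + 1)) with hM
  have hMne : M ≠ 0 := hmd
  set C : ℂ := ((Fintype.card F : ℂ) - 1) ^ n with hC
  rw [Finset.sum_filter]
  rw [← Fintype.sum_equiv (Fin.snocEquiv (fun _ : Fin (n + 2) => F))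
    (fun p : F × (Fin (n + 1) → F) =>
      if (∏ k, p.2 k) * p.1 = j then χ (M * p.1) else 0)
    (fun x : Fin (n + 2) → F => if ∏ k, x k = j then χ (∑ k, m k * x k) else 0)
    (by
      rintro ⟨a, z⟩
      show (if (∏ k, z k) * a = j then χ (M * a) else 0)
          = if ∏ k, (Fin.snoc z a : Fin (n+2) → F) k = j
              then χ (∑ k, m k * (Fin.snoc z a : Fin (n+2) → F) k) else 0
      rw [Fin.prod_snoc]
      have hsum : ∑ k, m k * (Fin.snoc z a : Fin (n+2) → F) k = M * a := by
        rw [Fin.sum_univ_castSucc]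
        have h0 : ∀ k : Fin (n + 1),
            m (Fin.castSucc k) * (Fin.snoc z a : Fin (n+2) → F) (Fin.castSucc k) = 0 :=
          fun k => by
            rw [hm0 (Fin.castSucc k) (by simpa using k.isLt), zero_mul]
        rw [Finset.sum_congr rfl (fun k _ => h0 k), Finset.sum_const_zero, zero_add,
          Fin.snoc_last]
      rw [hsum])]
  rw [Fintype.sum_prod_type]
  have inner : ∀ a : F,
      (∑ z : Fin (n + 1) → F, if (∏ k, z k) * a = j then χ (M * a) else 0)
        = if a = 0 then 0 else C * χ (M * a) := by
    intro a
    by_cases ha : a = 0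
    · simp [ha, hj, Ne.symm hj]
    · rw [if_neg ha, Finset.sum_ite, Finset.sum_const_zero, add_zero, Finset.sum_const]
      have hcond : Finset.univ.filter (fun z : Fin (n+1) → F => (∏ k, z k) * a = j)
          = Finset.univ.filter (fun z => ∏ k, z k = j * a⁻¹) :=
        Finset.filter_congr (fun z _ =>
          ⟨fun h => by rw [← h, mul_assoc, mul_inv_cancel₀ ha, mul_one],
           fun h => by rw [h, mul_assoc, inv_mul_cancel₀ ha, mul_one]⟩)
      rw [hcond, count_prod_eq F n (j * a⁻¹) (mul_ne_zero hj (inv_ne_zero ha)),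
        nsmul_eq_mul, hC, Nat.cast_pow, Nat.cast_sub Fintype.card_pos, Nat.cast_one]
  simp_rw [inner]
  rw [Finset.sum_ite, Finset.sum_const_zero, zero_add, ← Finset.mul_sum]
  have hsum0 : ∑ a : F, χ (M * a) = 0 := by
    have hne : χ.mulShift M ≠ 1 :=
      fun h => hχ ((AddChar.mulShift_unit_eq_one_iff χ (isUnit_iff_ne_zero.mpr hMne)).mp h)
    have := AddChar.sum_eq_zero_iff_ne_zero.mpr hne
    simpa [AddChar.mulShift_apply] using this
  have hsplit : ∑ a ∈ Finset.univ.filter (fun a : F => ¬ a = 0), χ (M * a) = -1 := by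
    have h := Finset.sum_filter_add_sum_filter_not Finset.univ (fun a : F => a = 0)
      (fun a => χ (M * a))
    rw [hsum0] at h
    have h0 : ∑ a ∈ Finset.univ.filter (fun a : F => a = 0), χ (M * a) = 1 := by
      have he : Finset.univ.filter (fun a : F => a = 0) = {(0 : F)} := by
        ext a; simp
      rw [he, Finset.sum_singleton, mul_zero, AddChar.map_zero_eq_one]
    rw [h0] at h
    exact eq_neg_of_add_eq_zero_right h
  rw [hsplit]
  show C * (-1) = -((Fintype.card F : ℂ) - 1) ^ n
  rw [mul_neg_one, hC]
end

section
/- Let χ be a nontrivial additive character of F_q, d ≥ 1, j ∈ F_q^*, and m ∈ F_q^d with exactly k coordinates equal to zero, where 1 ≤ k ≤ d-1. Then Σ_{x ∈ H_j} χ(m·x) = (-1)^{d-k} (q-1)^{k-1}. Equivalently, with |H_j| = (q-1)^{d-1}, the inverse Fourier transform of the normalized surface measure satisfies (dσ_j)^∨(m) = (-1)^{d-k} (q-1)^{-(d-k)}. -/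
/-!
Choose a coordinate `i₀` with `m i₀ = 0`. On `H_c` the coordinate `x i₀ = c / ∏_{i ≠ i₀} x i` is
determined by the others, which range freely over `(F^*)^{d-1}`, and it does not enter `m · x`.
The sum therefore factors as `∏_{i ≠ i₀} ∑_{t ≠ 0} χ (m i * t)`, and each factor is `q - 1` if
`m i = 0` and `-1` otherwise.
-/

open Finset

lemma AddChar.map_sum_eq_prod {A M ι : Type*} [AddCommMonoid A] [CommMonoid M]
    (ψ : AddChar A M) (s : Finset ι) (f : ι → A) : ψ (∑ i ∈ s, f i) = ∏ i ∈ s, ψ (f i) := by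
  induction s using Finset.cons_induction with
  | empty => simp
  | cons a s _ ih => rw [sum_cons, prod_cons, map_add_eq_mul, ih]

variable {F R ι : Type*} [Field F] [Fintype F] [DecidableEq F] [CommRing R] [IsDomain R]
  [Fintype ι] [DecidableEq ι]

lemma AddChar.sum_mul_compl_zero {ψ : AddChar F R} (hψ : ψ ≠ 1) (b : F) :
    ∑ t ∈ ({0}ᶜ : Finset F), ψ (b * t) = if b = 0 then (Fintype.card F : R) - 1 else -1 := by
  have h := sum_mulShift b (IsPrimitive.of_ne_one hψ)
  rw [← sum_compl_add_sum {0}, sum_singleton, zero_mul, map_zero_eq_one] at h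
  simp_rw [mul_comm b]
  split_ifs at h ⊢ <;> linear_combination h

lemma AddChar.sum_piFinset_compl_zero_dot {ψ : AddChar F R} (hψ : ψ ≠ 1) (m : ι → F) :
    ∑ y ∈ Fintype.piFinset (fun _ : ι => ({0}ᶜ : Finset F)), ψ (∑ i, m i * y i)
      = ∏ i, if m i = 0 then (Fintype.card F : R) - 1 else -1 := by
  simp_rw [ψ.map_sum_eq_prod, ← ψ.sum_mul_compl_zero hψ]
  exact sum_prod_piFinset _ fun i t => ψ (m i * t)

lemma sum_ite_mul_eq {M : Type*} [AddCommMonoid M] {c : F} (hc : c ≠ 0) (p : F) (a : M) :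
    ∑ t : F, (if t * p = c then a else 0) = if p ≠ 0 then a else 0 := by
  by_cases hp : p = 0
  · simp [hp, hc.symm]
  · simp_rw [← eq_div_iff hp, sum_ite_eq', mem_univ, if_true, if_pos hp]

lemma sum_filter_prod_eq_sum_piFinset {M : Type*} [AddCommMonoid M] {c : F} (hc : c ≠ 0)
    (i₀ : ι) (g : ({i // i ≠ i₀} → F) → M) :
    ∑ x ∈ univ.filter (fun x : ι → F => ∏ i, x i = c), g (fun i => x i)
      = ∑ y ∈ Fintype.piFinset (fun _ => ({0}ᶜ : Finset F)), g y := by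
  set e := Equiv.funSplitAt i₀ F
  have hsymm (t : F) (y : {i // i ≠ i₀} → F) :
      e.symm (t, y) i₀ = t ∧ (fun i : {i // i ≠ i₀} => e.symm (t, y) i) = y :=
    Prod.ext_iff.mp (e.apply_symm_apply (t, y))
  have hfilter : univ.filter (fun y : {i // i ≠ i₀} → F => ∏ i, y i ≠ 0)
      = Fintype.piFinset (fun _ => ({0}ᶜ : Finset F)) := by
    ext y; simp [prod_ne_zero_iff]
  rw [sum_filter, ← e.symm.sum_comp, Fintype.sum_prod_type, sum_comm, ← hfilter, sum_filter]
  refine sum_congr rfl fun y _ => ?_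
  simp only [Fintype.prod_eq_mul_prod_subtype_ne _ i₀, (hsymm _ y).1, (hsymm _ y).2]
  exact sum_ite_mul_eq hc _ _

theorem AddChar.sum_filter_prod_eq_dot {ψ : AddChar F R} (hψ : ψ ≠ 1) {c : F} (hc : c ≠ 0)
    (m : ι → F) {i₀ : ι} (hi₀ : m i₀ = 0) :
    ∑ x ∈ univ.filter (fun x : ι → F => ∏ i, x i = c), ψ (∑ i, m i * x i)
      = (-1) ^ #{i | m i ≠ 0} * ((Fintype.card F : R) - 1) ^ (#{i | m i = 0} - 1) := by
  have hdot (x : ι → F) : ∑ i, m i * x i = ∑ i : {i // i ≠ i₀}, m i * x i := by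
    rw [Fintype.sum_eq_add_sum_subtype_ne _ i₀, hi₀, zero_mul, zero_add]
  simp_rw [hdot]
  rw [sum_filter_prod_eq_sum_piFinset hc i₀ fun y => ψ (∑ i : {i // i ≠ i₀}, m i * y i),
    ψ.sum_piFinset_compl_zero_dot hψ, ← prod_subtype (univ.erase i₀) (by simp)
      fun i => if m i = 0 then (Fintype.card F : R) - 1 else -1, prod_ite,
    prod_const, prod_const, filter_erase, filter_erase, card_erase_of_mem (by simp [hi₀]),
    erase_eq_of_notMem (by simp [hi₀]), mul_comm]

theorem hamming_fourier_some_zeros_general (F : Type) [Field F] [Fintype F] [DecidableEq F]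
    (χ : AddChar F ℂ) (hχ : χ ≠ 1) (d k : ℕ) (hk1 : 1 ≤ k)
    (j : F) (hj : j ≠ 0) (m : Fin d → F)
    (hm : (Finset.univ.filter (fun i : Fin d => m i = 0)).card = k) :
    (∑ x ∈ Finset.univ.filter (fun x : Fin d → F => ∏ i, x i = j),
        χ (∑ i, m i * x i)
      = (-1 : ℂ) ^ (d - k) * ((Fintype.card F : ℂ) - 1) ^ (k - 1)) ∧
    (((Fintype.card F : ℂ) - 1) ^ (d - 1))⁻¹ *
        ∑ x ∈ Finset.univ.filter (fun x : Fin d → F => ∏ i, x i = j),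
          χ (∑ i, m i * x i)
      = (-1 : ℂ) ^ (d - k) * (((Fintype.card F : ℂ) - 1) ^ (d - k))⁻¹ := by
  obtain ⟨i₀, hi₀⟩ : ∃ i, m i = 0 := by
    obtain ⟨i, hi⟩ := card_pos.mp (hm ▸ hk1)
    exact ⟨i, (mem_filter.mp hi).2⟩
  have hkd : k ≤ d := hm ▸ (card_le_univ _).trans_eq (Fintype.card_fin d)
  have hnz : #{i | m i ≠ 0} = d - k := by
    have := card_filter_add_card_filter_not (s := univ) fun i => m i = 0
    rw [hm, card_fin] at this
    simp only [ne_eq]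
    omega
  have hsum := χ.sum_filter_prod_eq_dot hχ hj m hi₀
  rw [hm, hnz] at hsum
  refine ⟨hsum, ?_⟩
  have hq : (Fintype.card F : ℂ) - 1 ≠ 0 := by
    rw [sub_ne_zero]
    exact_mod_cast Fintype.one_lt_card.ne'
  rw [hsum, show d - 1 = (d - k) + (k - 1) by omega, pow_add]
  field_simp

/-- If `m` has exactly `k` zero coordinates with `1 ≤ k ≤ d-1`, then
`∑_{x ∈ H_j} χ(m·x) = (-1)^{d-k} (q-1)^{k-1}`, equivalently
`(dσ_j)^∨(m) = (-1)^{d-k} (q-1)^{-(d-k)}`. -/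
theorem hamming_fourier_some_zeros (F : Type) [Field F] [Fintype F] [DecidableEq F]
    (χ : AddChar F ℂ) (hχ : χ ≠ 1) (d k : ℕ) (hk1 : 1 ≤ k) (hk2 : k ≤ d - 1)
    (j : F) (hj : j ≠ 0) (m : Fin d → F)
    (hm : (Finset.univ.filter (fun i : Fin d => m i = 0)).card = k) :
    (∑ x ∈ Finset.univ.filter (fun x : Fin d → F => ∏ i, x i = j),
        χ (∑ i, m i * x i)
      = (-1 : ℂ) ^ (d - k) * ((Fintype.card F : ℂ) - 1) ^ (k - 1)) ∧
    (((Fintype.card F : ℂ) - 1) ^ (d - 1))⁻¹ *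
        ∑ x ∈ Finset.univ.filter (fun x : Fin d → F => ∏ i, x i = j),
          χ (∑ i, m i * x i)
      = (-1 : ℂ) ^ (d - k) * (((Fintype.card F : ℂ) - 1) ^ (d - k))⁻¹ :=
  hamming_fourier_some_zeros_general F χ hχ d k hk1 j hj m hm
end

section
/- Let χ be a nontrivial additive character of F_q, j ∈ F_q^*, and define for each x ∈ F_q^d the quantity T(x) = Σ_{m ∈ N_0} χ(-m·x) (q-1)^{-(d-1)} Σ_{y ∈ H_j} χ(m·y), where N_0 is the set of m with all coordinates nonzero. Then |T(x)| ≤ (q-1)^{-(d-1)} Σ_{z ∈ F_q^d} |Σ_{m ∈ N_0} χ(m·z)| ≤ 2^d q^d / (q-1)^{d-1}, hence |T(x)| ≤ C·q for a constant C depending only on d. -/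
/-!
Expanding the inner sum turns `T(x)` into `(q-1)^{-(d-1)} ∑_{y ∈ H_j} ∑_{m ∈ N_0} χ(m·(y-x))`.
The sum over `N_0` factors over the coordinates as `∏_i ∑_{t ≠ 0} χ(t (y_i - x_i))`, and each
factor is `q - 1` or `-1` according as `y_i = x_i` or not. Enlarging `H_j` to all of `F_q^d` and
translating by `x` bounds the sum over `y` by `(∑_z |∑_{t ≠ 0} χ(t z)|)^d = (2(q-1))^d`, so
`|T(x)| ≤ 2^d (q-1)^d / (q-1)^{d-1} ≤ 2^d q`.
-/

open Finset

lemma Complex.norm_natCast_sub_one {n : ℕ} (hn : 0 < n) : ‖(n : ℂ) - 1‖ = n - 1 := by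
  rw [← Nat.cast_pred hn, Complex.norm_natCast, Nat.cast_pred hn]

namespace AddChar

lemma map_sum_eq_prod_s10 {A M : Type*} [AddCommMonoid A] [CommMonoid M] (ψ : AddChar A M)
    {ι : Type*} (s : Finset ι) (f : ι → A) : ψ (∑ i ∈ s, f i) = ∏ i ∈ s, ψ (f i) := by
  induction s using Finset.cons_induction with
  | empty => simp
  | cons a s ha ih => rw [sum_cons, prod_cons, map_add_eq_mul, ih]

variable {F : Type*} [Field F] [Fintype F] [DecidableEq F]

lemma sum_ne_zero_mul_of_ne_zero {R : Type*} [CommRing R] [IsDomain R] {ψ : AddChar F R}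
    (hψ : ψ ≠ 1) {z : F} (hz : z ≠ 0) : ∑ t ∈ univ.filter (· ≠ 0), ψ (t * z) = -1 := by
  have hψz : ψ.mulShift z ≠ 1 := by
    rwa [Ne, mulShift_unit_eq_one_iff _ hz.isUnit]
  have hsum : ∑ t, ψ (t * z) = 0 := by
    simpa [mulShift_apply, mul_comm] using sum_eq_zero_of_ne_one hψz
  rw [filter_ne', sum_erase_eq_sub (mem_univ _), hsum, zero_mul, map_zero_eq_one, zero_sub]

lemma norm_sum_ne_zero_mul {ψ : AddChar F ℂ} (hψ : ψ ≠ 1) (z : F) :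
    ‖∑ t ∈ univ.filter (· ≠ 0), ψ (t * z)‖ = if z = 0 then (Fintype.card F : ℝ) - 1 else 1 := by
  split_ifs with hz
  · simp only [hz, mul_zero, map_zero_eq_one, sum_const, filter_ne', mem_univ,
      card_erase_of_mem, card_univ, nsmul_eq_mul, mul_one, RCLike.norm_natCast]
    exact Nat.cast_pred Fintype.card_pos
  · rw [sum_ne_zero_mul_of_ne_zero hψ hz, norm_neg, norm_one]

lemma sum_norm_sum_ne_zero_mul {ψ : AddChar F ℂ} (hψ : ψ ≠ 1) :
    ∑ z, ‖∑ t ∈ univ.filter (· ≠ 0), ψ (t * z)‖ = 2 * ((Fintype.card F : ℝ) - 1) := by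
  simp only [norm_sum_ne_zero_mul hψ]
  simp only [sum_ite, filter_eq', filter_ne', mem_univ, ↓reduceIte, sum_const, card_singleton,
    card_erase_of_mem, card_univ, one_smul, nsmul_eq_mul, mul_one, Nat.cast_pred Fintype.card_pos]
  ring

-- An arbitrary instance, since over `Fin d` the one found is `Nat.decidableForallFin`.
variable {ι : Type*} [Fintype ι] [DecidableEq ι] [DecidablePred fun m : ι → F => ∀ i, m i ≠ 0]

lemma sum_forall_ne_zero_eq_prod {R : Type*} [CommRing R] (ψ : AddChar F R) (z : ι → F) :
    ∑ m ∈ univ.filter (fun m : ι → F => ∀ i, m i ≠ 0), ψ (∑ i, m i * z i)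
      = ∏ i, ∑ t ∈ univ.filter (· ≠ 0), ψ (t * z i) := by
  have hbox : univ.filter (fun m : ι → F => ∀ i, m i ≠ 0)
      = Fintype.piFinset fun _ => univ.filter (· ≠ 0) := by
    ext m
    simp [Fintype.mem_piFinset]
  rw [hbox, prod_univ_sum]
  exact sum_congr rfl fun m _ => ψ.map_sum_eq_prod_s10 _ _

lemma sum_norm_sum_forall_ne_zero {ψ : AddChar F ℂ} (hψ : ψ ≠ 1) :
    ∑ z : ι → F, ‖∑ m ∈ univ.filter (fun m : ι → F => ∀ i, m i ≠ 0), ψ (∑ i, m i * z i)‖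
      = (2 * ((Fintype.card F : ℝ) - 1)) ^ Fintype.card ι := by
  simp only [sum_forall_ne_zero_eq_prod, norm_prod]
  rw [← Fintype.prod_sum (fun _ z => ‖∑ t ∈ univ.filter (· ≠ 0), ψ (t * z)‖),
    sum_norm_sum_ne_zero_mul hψ, prod_const, card_univ]

lemma norm_sum_mul_const_mul_sum_le {ψ : AddChar F ℂ} (hψ : ψ ≠ 1) (c : ℂ) (s : Finset (ι → F))
    (x : ι → F) :
    ‖∑ m ∈ univ.filter (fun m : ι → F => ∀ i, m i ≠ 0),
        ψ (-∑ i, m i * x i) * (c * ∑ y ∈ s, ψ (∑ i, m i * y i))‖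
      ≤ ‖c‖ * (2 * ((Fintype.card F : ℝ) - 1)) ^ Fintype.card ι := by
  set N := univ.filter (fun m : ι → F => ∀ i, m i ≠ 0)
  have hshift : ∀ m : ι → F, ψ (-∑ i, m i * x i) * (c * ∑ y ∈ s, ψ (∑ i, m i * y i))
      = c * ∑ y ∈ s, ψ (∑ i, m i * (y - x) i) := fun m => by
    simp only [mul_left_comm _ c, mul_sum, ← map_add_eq_mul, Pi.sub_apply, mul_sub,
      sum_sub_distrib, neg_add_eq_sub]
  rw [sum_congr rfl fun m _ => hshift m, ← mul_sum, norm_mul, sum_comm]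
  gcongr
  calc ‖∑ y ∈ s, ∑ m ∈ N, ψ (∑ i, m i * (y - x) i)‖
      ≤ ∑ y ∈ s, ‖∑ m ∈ N, ψ (∑ i, m i * (y - x) i)‖ := norm_sum_le _ _
    _ ≤ ∑ y, ‖∑ m ∈ N, ψ (∑ i, m i * (y - x) i)‖ :=
        sum_le_univ_sum_of_nonneg fun _ => norm_nonneg _
    _ = ∑ z, ‖∑ m ∈ N, ψ (∑ i, m i * z i)‖ :=
        Fintype.sum_equiv (Equiv.subRight x) _ _ fun y => by rw [Equiv.subRight_apply]
    _ = _ := sum_norm_sum_forall_ne_zero hψ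

end AddChar

lemma sub_one_pow_div_sub_one_pow_pred_le {q : ℝ} (hq : 1 < q) (d : ℕ) :
    (q - 1) ^ d / (q - 1) ^ (d - 1) ≤ q := by
  rcases d with _ | d
  · simpa using hq.le
  · have hq₀ : q - 1 ≠ 0 := sub_ne_zero.2 hq.ne'
    rw [pow_succ, Nat.add_sub_cancel, mul_div_cancel_left₀ _ (pow_ne_zero _ hq₀)]
    linarith

theorem T_bound_general (d : ℕ) :
    ∃ C : ℝ, 0 < C ∧
      ∀ (F : Type) [Field F] [Fintype F] [DecidableEq F],
        ∀ (χ : AddChar F ℂ), χ ≠ 1 →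
        ∀ j : F, j ≠ 0 →
        ∀ x : Fin d → F,
          ‖(∑ m ∈ Finset.univ.filter (fun m : Fin d → F => ∀ i, m i ≠ 0),
              χ (-∑ i, m i * x i) * ((((Fintype.card F : ℂ) - 1) ^ (d - 1))⁻¹ *
                ∑ y ∈ Finset.univ.filter (fun y : Fin d → F => ∏ i, y i = j),
                  χ (∑ i, m i * y i)))‖
            ≤ 2 ^ d * (Fintype.card F : ℝ) ^ d / ((Fintype.card F : ℝ) - 1) ^ (d - 1)
          ∧
          ‖(∑ m ∈ Finset.univ.filter (fun m : Fin d → F => ∀ i, m i ≠ 0),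
              χ (-∑ i, m i * x i) * ((((Fintype.card F : ℂ) - 1) ^ (d - 1))⁻¹ *
                ∑ y ∈ Finset.univ.filter (fun y : Fin d → F => ∏ i, y i = j),
                  χ (∑ i, m i * y i)))‖
            ≤ C * Fintype.card F := by
  refine ⟨2 ^ d, by positivity, fun F _ _ _ χ hχ j _ x => ?_⟩
  have hq : (1 : ℝ) < Fintype.card F := by exact_mod_cast Fintype.one_lt_card
  have hT := AddChar.norm_sum_mul_const_mul_sum_le hχ (((Fintype.card F : ℂ) - 1) ^ (d - 1))⁻¹
    (univ.filter fun y : Fin d → F => ∏ i, y i = j) x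
  rw [norm_inv, norm_pow, Complex.norm_natCast_sub_one Fintype.card_pos, inv_mul_eq_div,
    Fintype.card_fin] at hT
  constructor
  · refine hT.trans ?_
    gcongr
    rw [mul_pow]
    gcongr
    linarith
  · refine hT.trans ?_
    rw [mul_pow, mul_div_assoc]
    gcongr
    exact sub_one_pow_div_sub_one_pow_pred_le hq d

/-- For `T(x) = ∑_{m ∈ N_0} χ(-m·x) (q-1)^{-(d-1)} ∑_{y ∈ H_j} χ(m·y)`, we have
`|T(x)| ≤ 2^d q^d / (q-1)^{d-1}`, hence `|T(x)| ≤ C q` for a constant `C`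
depending only on `d`. -/
theorem T_bound (d : ℕ) (hd : 1 ≤ d) :
    ∃ C : ℝ, 0 < C ∧
      ∀ (F : Type) [Field F] [Fintype F] [DecidableEq F],
        ∀ (χ : AddChar F ℂ), χ ≠ 1 →
        ∀ j : F, j ≠ 0 →
        ∀ x : Fin d → F,
          ‖(∑ m ∈ Finset.univ.filter (fun m : Fin d → F => ∀ i, m i ≠ 0),
              χ (-∑ i, m i * x i) * ((((Fintype.card F : ℂ) - 1) ^ (d - 1))⁻¹ *
                ∑ y ∈ Finset.univ.filter (fun y : Fin d → F => ∏ i, y i = j),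
                  χ (∑ i, m i * y i)))‖
            ≤ 2 ^ d * (Fintype.card F : ℝ) ^ d / ((Fintype.card F : ℝ) - 1) ^ (d - 1)
          ∧
          ‖(∑ m ∈ Finset.univ.filter (fun m : Fin d → F => ∀ i, m i ≠ 0),
              χ (-∑ i, m i * x i) * ((((Fintype.card F : ℂ) - 1) ^ (d - 1))⁻¹ *
                ∑ y ∈ Finset.univ.filter (fun y : Fin d → F => ∏ i, y i = j),
                  χ (∑ i, m i * y i)))‖
            ≤ C * Fintype.card F :=
  T_bound_general d
end
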